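/- Let H ∈ (1/2, 1) and m, m' > 0. Then lim_{t→∞} t^{2−2H} ∫_{−∞}^0 ( ∫_{−∞}^t e^{m u} e^{−m'(t−v)} |v − u|^{2H−2} dv ) du = 1/(m m'). (Equivalently, the cross-covariance E[Z_0^m Z_t^{m'}] = H(2H−1) ∫_{−∞}^0 ∫_{−∞}^t e^{mu} e^{−m'(t−v)} |v−u|^{2H−2} dv du of the stationary fractional Ornstein–Uhlenbeck processes with drift parameters m and m' satisfies E[Z_0^m Z_t^{m'}] ∼ (H(2H−1)/(m m')) t^{2H−2} as t → ∞.) -/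

import Mathlib

/-!
After the substitution `v = t - s` and with `a = 2H - 2`, the rescaled inner integral is
`∫_{s>0} e^{-m's} (|t - u - s| / t)^a ds`, whose integrand tends to `e^{-m's}`. For `s ≤ t/2`
the ratio is at least `1/2`, giving the dominating function `2^{-a} e^{-m's}`. For `s > t/2`
one splits `e^{-m's} ≤ e^{-m't/4} e^{-m's/2}`; since `∫_{s>0} e^{-μs} |c - s|^a ds` is bounded
uniformly in `c` (the singularity is integrable because `a > -1`), this part is
`O(t^{-a} e^{-m't/4}) → 0`. The same bounds dominate the outer integrand `e^{mu}` times the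
inner limit, so dominated convergence twice gives `∫_{u≤0} e^{mu} / m' du = 1 / (m m')`.
-/

open MeasureTheory Real Filter Set Topology

lemma integral_Iic_eq_integral_Ioi_sub {E : Type*} [NormedAddCommGroup E] [NormedSpace ℝ E]
    (t : ℝ) (f : ℝ → E) : ∫ v in Iic t, f v = ∫ s in Ioi 0, f (t - s) := by
  rw [← integral_Ici_eq_integral_Ioi,
    ← (volume.measurePreserving_sub_left t).setIntegral_preimage_emb
      (Homeomorph.subLeft t).measurableEmbedding f (Iic t)]
  congr 1
  ext s
  simp

lemma integral_exp_neg_mul_Ioi_zero {μ : ℝ} (hμ : 0 < μ) :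
    ∫ s in Ioi (0 : ℝ), exp (-μ * s) = 1 / μ := by
  rw [integral_exp_mul_Ioi (neg_neg_of_pos hμ)]
  simp

section AbsRpow

variable {a : ℝ}

lemma intervalIntegrable_abs_rpow (ha : -1 < a) (x y : ℝ) :
    IntervalIntegrable (fun s : ℝ => |s| ^ a) volume x y := by
  simpa [Complex.norm_cpow_real] using
    (intervalIntegral.intervalIntegrable_cpow' (a := x) (b := y) (r := a) (by simpa using ha)).norm

lemma integrable_indicator_abs_rpow (ha : -1 < a) :
    Integrable ((Icc (-1 : ℝ) 1).indicator fun x => |x| ^ a) := by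
  rw [integrable_indicator_iff measurableSet_Icc, integrableOn_Icc_iff_integrableOn_Ioc]
  exact (intervalIntegrable_iff_integrableOn_Ioc_of_le (by norm_num)).1
    (intervalIntegrable_abs_rpow ha _ _)

lemma abs_rpow_le_one_add_indicator (ha : a ≤ 0) (x : ℝ) :
    |x| ^ a ≤ 1 + (Icc (-1 : ℝ) 1).indicator (fun x => |x| ^ a) x := by
  by_cases hx : x ∈ Icc (-1 : ℝ) 1
  · rw [indicator_of_mem hx]
    linarith
  · rw [indicator_of_notMem hx, add_zero]
    rw [mem_Icc, ← abs_le] at hx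
    exact rpow_le_one_of_one_le_of_nonpos (not_le.1 hx).le ha

variable {μ : ℝ}

lemma exp_mul_abs_sub_rpow_le (ha : a ≤ 0) (hμ : 0 ≤ μ) (c : ℝ) {s : ℝ} (hs : 0 ≤ s) :
    exp (-μ * s) * |c - s| ^ a
      ≤ exp (-μ * s) + (Icc (-1 : ℝ) 1).indicator (fun x => |x| ^ a) (c - s) := by
  have hexp : exp (-μ * s) ≤ 1 := exp_le_one_iff.2 (by nlinarith)
  have hind : 0 ≤ (Icc (-1 : ℝ) 1).indicator (fun x => |x| ^ a) (c - s) :=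
    indicator_nonneg (fun _ _ => by positivity) _
  calc exp (-μ * s) * |c - s| ^ a
      ≤ exp (-μ * s) * (1 + (Icc (-1 : ℝ) 1).indicator (fun x => |x| ^ a) (c - s)) :=
        mul_le_mul_of_nonneg_left (abs_rpow_le_one_add_indicator ha _) (exp_pos _).le
    _ ≤ _ := by nlinarith

lemma integrableOn_exp_mul_abs_sub_rpow (ha₁ : -1 < a) (ha₀ : a ≤ 0) (hμ : 0 < μ)
    (c : ℝ) :
    IntegrableOn (fun s => exp (-μ * s) * |c - s| ^ a) (Ioi 0) := by
  refine Integrable.mono' ((exp_neg_integrableOn_Ioi 0 hμ).add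
    ((integrable_indicator_abs_rpow ha₁).comp_sub_left c).integrableOn)
    (by fun_prop) ?_
  filter_upwards [ae_restrict_mem measurableSet_Ioi] with s hs
  rw [norm_of_nonneg (by positivity)]
  exact exp_mul_abs_sub_rpow_le ha₀ hμ.le c (le_of_lt hs)

lemma integral_exp_mul_abs_sub_rpow_le (ha₁ : -1 < a) (ha₀ : a ≤ 0) (hμ : 0 < μ) (c : ℝ) :
    ∫ s in Ioi 0, exp (-μ * s) * |c - s| ^ a
      ≤ 1 / μ + ∫ x in Icc (-1 : ℝ) 1, |x| ^ a := by
  have hind := (integrable_indicator_abs_rpow ha₁).comp_sub_left c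
  calc ∫ s in Ioi 0, exp (-μ * s) * |c - s| ^ a
      ≤ ∫ s in Ioi 0,
          (exp (-μ * s) + (Icc (-1 : ℝ) 1).indicator (fun x => |x| ^ a) (c - s)) :=
        setIntegral_mono_on (integrableOn_exp_mul_abs_sub_rpow ha₁ ha₀ hμ c)
          ((exp_neg_integrableOn_Ioi 0 hμ).add hind.integrableOn) measurableSet_Ioi
          fun s hs => exp_mul_abs_sub_rpow_le ha₀ hμ.le c (le_of_lt hs)
    _ = 1 / μ + ∫ s in Ioi 0, (Icc (-1 : ℝ) 1).indicator (fun x => |x| ^ a) (c - s) := by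
        rw [integral_add (exp_neg_integrableOn_Ioi 0 hμ) hind.integrableOn,
          integral_exp_neg_mul_Ioi_zero hμ]
    _ ≤ 1 / μ + ∫ s, (Icc (-1 : ℝ) 1).indicator (fun x => |x| ^ a) (c - s) :=
        add_le_add_right (setIntegral_le_integral hind
          (ae_of_all _ fun _ => indicator_nonneg (fun _ _ => by positivity) _)) _
    _ = 1 / μ + ∫ x in Icc (-1 : ℝ) 1, |x| ^ a := by
        rw [integral_sub_left_eq_self, integral_indicator measurableSet_Icc]

end AbsRpow

section ScaledKernel

variable {a μ : ℝ}

lemma rpow_neg_mul_rpow {t x : ℝ} (ht : 0 < t) (hx : 0 ≤ x) :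
    t ^ (-a) * x ^ a = (x / t) ^ a := by
  rw [div_rpow hx ht.le, rpow_neg ht.le, inv_mul_eq_div]

lemma rpow_neg_mul_abs_rpow_le (ha : a ≤ 0) {t x : ℝ} (ht : 0 < t) (hx : t / 2 ≤ |x|) :
    t ^ (-a) * |x| ^ a ≤ 2 ^ (-a) := by
  rw [rpow_neg_mul_rpow ht (abs_nonneg x), rpow_neg zero_le_two, ← inv_rpow zero_le_two]
  exact rpow_le_rpow_of_nonpos (by norm_num) (by rw [le_div_iff₀ ht]; linarith) ha

lemma tendsto_rpow_neg_mul_abs_sub_rpow (b : ℝ) :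
    Tendsto (fun t => t ^ (-a) * |t - b| ^ a) atTop (𝓝 1) := by
  have h : Tendsto (fun t => |1 - b / t| ^ a) atTop (𝓝 1) := by
    simpa using ((tendsto_const_nhds.sub (tendsto_const_nhds.div_atTop tendsto_id)).abs.rpow_const
      (Or.inl (by norm_num)) : Tendsto (fun t : ℝ => |1 - b / t| ^ a) atTop _)
  refine h.congr' ?_
  filter_upwards [eventually_gt_atTop 0] with t ht
  rw [rpow_neg_mul_rpow ht (abs_nonneg _), one_sub_div ht.ne', abs_div, abs_of_pos ht]

lemma tendsto_rpow_neg_mul_exp_mul (hμ : 0 < μ) (C : ℝ) :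
    Tendsto (fun t => t ^ (-a) * exp (-(μ / 4) * t) * C) atTop (𝓝 0) := by
  simpa using
    (tendsto_rpow_mul_exp_neg_mul_atTop_nhds_zero (-a) (μ / 4) (by positivity)).mul_const C

lemma integrableOn_exp_mul_rpow_neg_mul_abs_sub_rpow (ha₁ : -1 < a) (ha₀ : a ≤ 0)
    (hμ : 0 < μ) (t c : ℝ) :
    IntegrableOn (fun s => exp (-μ * s) * (t ^ (-a) * |c - s| ^ a)) (Ioi 0) :=
  IntegrableOn.congr_fun
    ((integrableOn_exp_mul_abs_sub_rpow ha₁ ha₀ hμ c).const_mul (t ^ (-a)))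
    (fun s _ => by ring) measurableSet_Ioi

lemma integral_eq_integral_indicator_Iic_add_integral_indicator_Ioi {f : ℝ → ℝ} {S : Set ℝ}
    (hf : IntegrableOn f S) (r : ℝ) :
    ∫ s in S, f s = (∫ s in S, (Iic r).indicator f s) + ∫ s in S, (Ioi r).indicator f s := by
  rw [← integral_add (hf.indicator (measurableSet_Iic (a := r)))
    (hf.indicator (measurableSet_Ioi (a := r))), ← compl_Iic]
  simp only [indicator_self_add_compl_apply]

lemma exp_neg_mul_le_of_half_lt (hμ : 0 ≤ μ) {t s : ℝ} (hs : t / 2 < s) :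
    exp (-μ * s) ≤ exp (-(μ / 4) * t) * exp (-(μ / 2) * s) := by
  rw [← exp_add]
  exact exp_le_exp.2 (by nlinarith)

lemma integral_indicator_Ioi_half_le (ha₁ : -1 < a) (ha₀ : a ≤ 0) (hμ : 0 < μ) (c : ℝ)
    {t : ℝ} (ht : 0 < t) :
    ∫ s in Ioi 0, (Ioi (t / 2)).indicator (fun s => exp (-μ * s) * (t ^ (-a) * |c - s| ^ a)) s
      ≤ t ^ (-a) * exp (-(μ / 4) * t) * (1 / (μ / 2) + ∫ x in Icc (-1 : ℝ) 1, |x| ^ a) := by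
  calc _ ≤ ∫ s in Ioi 0,
          t ^ (-a) * exp (-(μ / 4) * t) * (exp (-(μ / 2) * s) * |c - s| ^ a) := by
        refine setIntegral_mono_on
          ((integrableOn_exp_mul_rpow_neg_mul_abs_sub_rpow ha₁ ha₀ hμ t c).indicator
            measurableSet_Ioi)
          ((integrableOn_exp_mul_abs_sub_rpow ha₁ ha₀ (half_pos hμ) c).const_mul _)
          measurableSet_Ioi fun s _ => ?_
        by_cases hs : s ∈ Ioi (t / 2)
        · rw [indicator_of_mem hs]
          calc exp (-μ * s) * (t ^ (-a) * |c - s| ^ a)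
              ≤ exp (-(μ / 4) * t) * exp (-(μ / 2) * s) * (t ^ (-a) * |c - s| ^ a) :=
                mul_le_mul_of_nonneg_right (exp_neg_mul_le_of_half_lt hμ.le hs) (by positivity)
            _ = _ := by ring
        · rw [indicator_of_notMem hs]
          positivity
    _ ≤ _ := by
        rw [integral_const_mul]
        exact mul_le_mul_of_nonneg_left
          (integral_exp_mul_abs_sub_rpow_le ha₁ ha₀ (half_pos hμ) c) (by positivity)

lemma tendsto_integral_indicator_Ioi_half (ha₁ : -1 < a) (ha₀ : a ≤ 0) (hμ : 0 < μ)
    (u : ℝ) :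
    Tendsto (fun t => ∫ s in Ioi 0,
      (Ioi (t / 2)).indicator (fun s => exp (-μ * s) * (t ^ (-a) * |t - u - s| ^ a)) s)
      atTop (𝓝 0) := by
  refine squeeze_zero' ?_ ?_ (tendsto_rpow_neg_mul_exp_mul (a := a) hμ
    (1 / (μ / 2) + ∫ x in Icc (-1 : ℝ) 1, |x| ^ a))
  · filter_upwards [eventually_gt_atTop 0] with t ht
    exact integral_nonneg fun s => indicator_nonneg (fun s _ => by positivity) s
  · filter_upwards [eventually_gt_atTop 0] with t ht
    exact integral_indicator_Ioi_half_le ha₁ ha₀ hμ (t - u) ht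

lemma indicator_Iic_half_le (ha₀ : a ≤ 0) {u t : ℝ} (hu : u ≤ 0) (ht : 0 < t) (s : ℝ) :
    (Iic (t / 2)).indicator (fun s => exp (-μ * s) * (t ^ (-a) * |t - u - s| ^ a)) s
      ≤ 2 ^ (-a) * exp (-μ * s) := by
  by_cases hs : s ∈ Iic (t / 2)
  · rw [indicator_of_mem hs, mul_comm (2 ^ (-a))]
    refine mul_le_mul_of_nonneg_left (rpow_neg_mul_abs_rpow_le ha₀ ht ?_) (exp_pos _).le
    rw [mem_Iic] at hs
    rw [abs_of_pos (by linarith)]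
    linarith
  · rw [indicator_of_notMem hs]
    positivity

lemma tendsto_integral_indicator_Iic_half (ha₀ : a ≤ 0) (hμ : 0 < μ) {u : ℝ}
    (hu : u ≤ 0) :
    Tendsto (fun t => ∫ s in Ioi 0,
      (Iic (t / 2)).indicator (fun s => exp (-μ * s) * (t ^ (-a) * |t - u - s| ^ a)) s)
      atTop (𝓝 (1 / μ)) := by
  rw [← integral_exp_neg_mul_Ioi_zero hμ]
  refine tendsto_integral_filter_of_dominated_convergence (fun s => 2 ^ (-a) * exp (-μ * s))
    (Eventually.of_forall fun t =>
      (Measurable.indicator (by fun_prop) measurableSet_Iic).aestronglyMeasurable)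
    ?_ ((exp_neg_integrableOn_Ioi 0 hμ).const_mul _) (Eventually.of_forall fun s => ?_)
  · filter_upwards [eventually_gt_atTop 0] with t ht
    refine Eventually.of_forall fun s => ?_
    rw [norm_of_nonneg (indicator_nonneg (fun s _ => by positivity) s)]
    exact indicator_Iic_half_le ha₀ hu ht s
  · have h := (tendsto_rpow_neg_mul_abs_sub_rpow (a := a) (u + s)).const_mul (exp (-μ * s))
    rw [mul_one] at h
    refine h.congr' ?_
    filter_upwards [eventually_ge_atTop (2 * s)] with t hts
    rw [indicator_of_mem (by rw [mem_Iic]; linarith), sub_sub]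

end ScaledKernel

section CrossCovariance

variable {a μ : ℝ}

lemma tendsto_integral_exp_mul_rpow_neg_mul_abs_rpow (ha₁ : -1 < a) (ha₀ : a ≤ 0)
    (hμ : 0 < μ) {u : ℝ} (hu : u ≤ 0) :
    Tendsto (fun t => ∫ s in Ioi 0, exp (-μ * s) * (t ^ (-a) * |t - u - s| ^ a))
      atTop (𝓝 (1 / μ)) := by
  have h := (tendsto_integral_indicator_Iic_half ha₀ hμ hu).add
    (tendsto_integral_indicator_Ioi_half ha₁ ha₀ hμ u)
  rw [add_zero] at h
  exact h.congr fun t => (integral_eq_integral_indicator_Iic_add_integral_indicator_Ioi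
    (integrableOn_exp_mul_rpow_neg_mul_abs_sub_rpow ha₁ ha₀ hμ t (t - u)) (t / 2)).symm

lemma eventually_integral_exp_mul_rpow_neg_mul_abs_rpow_le (ha₁ : -1 < a) (ha₀ : a ≤ 0)
    (hμ : 0 < μ) :
    ∀ᶠ t in atTop, ∀ u ≤ 0,
      ∫ s in Ioi 0, exp (-μ * s) * (t ^ (-a) * |t - u - s| ^ a) ≤ 2 ^ (-a) / μ + 1 := by
  filter_upwards [eventually_gt_atTop 0, (tendsto_rpow_neg_mul_exp_mul (a := a) hμ
    (1 / (μ / 2) + ∫ x in Icc (-1 : ℝ) 1, |x| ^ a)).eventually (gt_mem_nhds one_pos)]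
    with t ht htail u hu
  have hF := integrableOn_exp_mul_rpow_neg_mul_abs_sub_rpow ha₁ ha₀ hμ t (t - u)
  have hmain : ∫ s in Ioi 0,
      (Iic (t / 2)).indicator (fun s => exp (-μ * s) * (t ^ (-a) * |t - u - s| ^ a)) s
        ≤ 2 ^ (-a) / μ :=
    calc _ ≤ ∫ s in Ioi 0, 2 ^ (-a) * exp (-μ * s) :=
          setIntegral_mono_on (hF.indicator measurableSet_Iic)
            ((exp_neg_integrableOn_Ioi 0 hμ).const_mul _) measurableSet_Ioi
            fun s _ => indicator_Iic_half_le ha₀ hu ht s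
      _ = 2 ^ (-a) / μ := by
          rw [integral_const_mul, integral_exp_neg_mul_Ioi_zero hμ, mul_one_div]
  rw [integral_eq_integral_indicator_Iic_add_integral_indicator_Ioi hF (t / 2)]
  linarith [integral_indicator_Ioi_half_le ha₁ ha₀ hμ (t - u) ht]

lemma tendsto_integral_exp_mul_integral_exp_mul_rpow_neg_mul_abs_rpow {m : ℝ} (hm : 0 < m)
    (ha₁ : -1 < a) (ha₀ : a ≤ 0) (hμ : 0 < μ) :
    Tendsto (fun t => ∫ u in Iic 0,
      exp (m * u) * ∫ s in Ioi 0, exp (-μ * s) * (t ^ (-a) * |t - u - s| ^ a))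
      atTop (𝓝 (1 / (m * μ))) := by
  have hlim : ∫ u in Iic (0 : ℝ), exp (m * u) * (1 / μ) = 1 / (m * μ) := by
    rw [integral_mul_const, integral_exp_mul_Iic hm, mul_zero, exp_zero, one_div_mul_one_div]
  rw [← hlim]
  refine tendsto_integral_filter_of_dominated_convergence
    (fun u => exp (m * u) * (2 ^ (-a) / μ + 1))
    (Eventually.of_forall fun t => ?_) ?_ ((integrableOn_exp_mul_Iic hm 0).mul_const _) ?_
  · have hmeas : Measurable fun p : ℝ × ℝ =>
        exp (-μ * p.2) * (t ^ (-a) * |t - p.1 - p.2| ^ a) := by fun_prop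
    exact (by fun_prop : Continuous fun u => exp (m * u)).aestronglyMeasurable.mul
      hmeas.aestronglyMeasurable.integral_prod_right'
  · filter_upwards [eventually_gt_atTop 0,
      eventually_integral_exp_mul_rpow_neg_mul_abs_rpow_le ha₁ ha₀ hμ] with t ht hbound
    filter_upwards [ae_restrict_mem measurableSet_Iic] with u hu
    rw [norm_of_nonneg (mul_nonneg (exp_pos _).le (integral_nonneg fun s => by positivity))]
    exact mul_le_mul_of_nonneg_left (hbound u hu) (exp_pos _).le
  · filter_upwards [ae_restrict_mem measurableSet_Iic] with u hu
    exact (tendsto_integral_exp_mul_rpow_neg_mul_abs_rpow ha₁ ha₀ hμ hu).const_mul _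

lemma rpow_neg_mul_integral_Iic_integral_Iic_eq (a m μ t : ℝ) :
    t ^ (-a) * ∫ u in Iic (0 : ℝ), ∫ v in Iic t,
        exp (m * u) * exp (-μ * (t - v)) * |v - u| ^ a
      = ∫ u in Iic 0,
          exp (m * u) * ∫ s in Ioi 0, exp (-μ * s) * (t ^ (-a) * |t - u - s| ^ a) := by
  rw [← integral_const_mul]
  congr 1
  ext u
  rw [integral_Iic_eq_integral_Ioi_sub, ← integral_const_mul, ← integral_const_mul]
  congr 1
  ext s
  rw [sub_sub_cancel, sub_right_comm]
  ring

end CrossCovariance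

/-- power-law asymptotics of the cross-covariance of two
stationary fractional Ornstein–Uhlenbeck processes:
`t^{2−2H} · H(2H−1)⁻¹ E[Z_0^m Z_t^{m'}] → 1/(m m')`. -/
theorem statement_19 (H m m' : ℝ) (hH : 1 / 2 < H) (hH1 : H < 1)
    (hm : 0 < m) (hm' : 0 < m') :
    Filter.Tendsto
      (fun t : ℝ =>
        t ^ (2 - 2 * H) *
          ∫ u in Set.Iic (0 : ℝ), ∫ v in Set.Iic t,
            Real.exp (m * u) * Real.exp (-m' * (t - v)) * |v - u| ^ (2 * H - 2))
      Filter.atTop (nhds (1 / (m * m'))) := by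
  have h2H : 2 - 2 * H = -(2 * H - 2) := by ring
  simp_rw [h2H, rpow_neg_mul_integral_Iic_integral_Iic_eq]
  exact tendsto_integral_exp_mul_integral_exp_mul_rpow_neg_mul_abs_rpow hm (by linarith)
    (by linarith) hm'
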